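/- arXiv:1411.2935 — 2 statements merged into one kernel-verified Lean document; each statement's English description precedes it below -/
import Mathlib

section
/- Let n ≥ 1, let f_1,…,f_n be invertible 2×2 real matrices, let γ be any 2×2 real matrix, and define T : ℝ → ℝ by T(z) = Tr( (f_1⁻¹ S(z) f_1)·(f_2⁻¹ S(z) f_2)⋯(f_n⁻¹ S(z) f_n)·γ ). Set A_i = f_i⁻¹ D f_i for 1 ≤ i ≤ n. Then for every k ≥ 0, the k-th derivative of T at 0 equals 2^{−k} · Σ_{p ∈ P(k,n)} (k choose p) · Tr( A_1^{[p_1]} · A_2^{[p_2]} ⋯ A_n^{[p_n]} · γ ), where A^0 denotes the identity matrix and A^1 = A. -/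
open Finset

/-- The matrix `A(l,θ) = [[cos θ, −e^l sin θ], [−e^{−l} sin θ, −cos θ]]`. -/
noncomputable def Amat (l θ : ℝ) : Matrix (Fin 2) (Fin 2) ℝ :=
  !![Real.cos θ, -Real.exp l * Real.sin θ; -Real.exp (-l) * Real.sin θ, -Real.cos θ]

/-- The matrix `γ_L = diag(e^{L/2}, e^{−L/2})`. -/
noncomputable def gammaMat (L : ℝ) : Matrix (Fin 2) (Fin 2) ℝ :=
  !![Real.exp (L / 2), 0; 0, Real.exp (-(L / 2))]

/-- The matrix `S(z) = diag(e^{z/2}, e^{−z/2})`. -/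
noncomputable def Smat (z : ℝ) : Matrix (Fin 2) (Fin 2) ℝ :=
  !![Real.exp (z / 2), 0; 0, Real.exp (-(z / 2))]

/-- The matrix `D = diag(1, −1)`. -/
def Dmat : Matrix (Fin 2) (Fin 2) ℝ := !![1, 0; 0, -1]

/-- Alternating length `L_I = Σ_{j=1}^k (−1)^j l_{i_j}` for `I = {i_1 < ⋯ < i_k}`. -/
def altLen {r : ℕ} (l : Fin r → ℝ) (I : Finset (Fin r)) : ℝ :=
  let s := (I.sort (· ≤ ·)).map l
  ∑ j ∈ Finset.range s.length, (-1 : ℝ) ^ (j + 1) * s.getD j 0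

/-- Signature `s(I) = (i_2−i_1+1) + (i_4−i_3+1) + ⋯ + (i_k−i_{k−1}+1)` for `I` of even
cardinality, with `s(∅) = 0`. -/
def sig {r : ℕ} (I : Finset (Fin r)) : ℕ :=
  let s := (I.sort (· ≤ ·)).map Fin.val
  ∑ m ∈ Finset.range (s.length / 2), (s.getD (2 * m + 1) 0 - s.getD (2 * m) 0 + 1)

/-- `P(k,n)`: the set of `n`-tuples of nonnegative integers summing to `k`. -/
def Pkn (k n : ℕ) : Finset (Fin n → ℕ) := Finset.Nat.antidiagonalTuple n k

/-- `B_{n,k,r}`: sum of multinomial coefficients `(k choose q)` over `q ∈ P(k,n)` whose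
first `r` entries are odd and remaining entries are even. -/
def Bnkr (n k r : ℕ) : ℕ :=
  ∑ q ∈ (Pkn k n).filter
      (fun q => ∀ i : Fin n, ((i : ℕ) < r → Odd (q i)) ∧ (r ≤ (i : ℕ) → Even (q i))),
    Nat.multinomial Finset.univ q

/-! Since `S'(z) = ½ S(z) D`, the factors `z ↦ a S(z) Dᵐ b` satisfy `F_m' = ½ F_{m+1}`.
By the (noncommutative) product rule and the Pascal rule for multinomial coefficients, the sums
`∑_{p ∈ P(k,n)} (k choose p) ∏ᵢ F_{p_i}` have the same property, so the `k`-th derivative of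
`T` is `2⁻ᵏ` times the `k`-th sum. At `z = 0`, `S(0) = 1` and `D² = 1` turn `f⁻¹ Dᵐ f` into
`A^{[m]}`. -/

open scoped Nat

theorem Finset.sum_add_single_one {α : Type*} [DecidableEq α] {s : Finset α} {j : α}
    (hj : j ∈ s) (p : α → ℕ) : ∑ i ∈ s, (p + Pi.single j 1 : α → ℕ) i = ∑ i ∈ s, p i + 1 := by
  simp [sum_add_distrib, hj]

theorem Pi.sub_single_one_add_single_one {α : Type*} [DecidableEq α] {q : α → ℕ} {j : α}
    (hj : q j ≠ 0) : q - Pi.single j 1 + Pi.single j 1 = q := by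
  ext i; rcases eq_or_ne i j with rfl | hi <;> simp [*]; omega

theorem Nat.succ_mul_multinomial_add_single {α : Type*} [DecidableEq α] {s : Finset α} {j : α}
    (hj : j ∈ s) (p : α → ℕ) :
    (p j + 1) * multinomial s (p + Pi.single j 1) = (∑ i ∈ s, p i + 1) * multinomial s p := by
  set q : α → ℕ := p + Pi.single j 1
  have hprod : ∏ i ∈ s, (q i)! = (p j + 1) * ∏ i ∈ s, (p i)! := by
    have hq : ∀ i ∈ s.erase j, (q i)! = (p i)! := fun i hi => by simp [q, ne_of_mem_erase hi]
    rw [← mul_prod_erase _ _ hj, ← mul_prod_erase _ _ hj, prod_congr rfl hq]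
    simp [q, Nat.factorial_succ, mul_assoc]
  apply Nat.eq_of_mul_eq_mul_left (prod_factorial_pos s p)
  calc (∏ i ∈ s, (p i)!) * ((p j + 1) * multinomial s q)
      = (∏ i ∈ s, (q i)!) * multinomial s q := by rw [hprod]; ring
    _ = (∑ i ∈ s, p i + 1)! := by rw [multinomial_spec, sum_add_single_one hj]
    _ = (∏ i ∈ s, (p i)!) * ((∑ i ∈ s, p i + 1) * multinomial s p) := by
        rw [Nat.factorial_succ, ← multinomial_spec s p]; ring

theorem Nat.multinomial_eq_sum_multinomial_sub_single {n k : ℕ} {q : Fin n → ℕ}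
    (hq : ∑ i, q i = k + 1) :
    multinomial univ q =
      ∑ j, if q j = 0 then 0 else multinomial univ (q - Pi.single j 1) := by
  refine Nat.eq_of_mul_eq_mul_left (Nat.succ_pos k) ?_
  have hterm (j : Fin n) :
      (k + 1) * (if q j = 0 then 0 else multinomial univ (q - Pi.single j 1)) =
        q j * multinomial univ q := by
    split_ifs with hj
    · simp [hj]
    · set p := q - Pi.single j 1
      have hpq : p + Pi.single j 1 = q := Pi.sub_single_one_add_single_one hj
      have h := succ_mul_multinomial_add_single (mem_univ j) p
      rw [← sum_add_single_one (mem_univ j), hpq, hq] at h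
      rw [← h, ← hpq]
      simp
  rw [mul_sum, sum_congr rfl fun j _ => hterm j, ← sum_mul, hq]

theorem Finset.Nat.sum_antidiagonalTuple_multinomial_smul_add_single {M : Type*}
    [AddCommMonoid M] (n k : ℕ) (X : (Fin n → ℕ) → M) :
    ∑ p ∈ antidiagonalTuple n k, ∑ j, Nat.multinomial univ p • X (p + Pi.single j 1) =
      ∑ q ∈ antidiagonalTuple n (k + 1), Nat.multinomial univ q • X q := by
  have hfiber (j : Fin n) :
      ∑ p ∈ antidiagonalTuple n k, Nat.multinomial univ p • X (p + Pi.single j 1) =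
        ∑ q ∈ antidiagonalTuple n (k + 1),
          (if q j = 0 then 0 else Nat.multinomial univ (q - Pi.single j 1)) • X q := by
    simp only [ite_smul, zero_smul, sum_ite, sum_const_zero, zero_add]
    refine sum_nbij' (· + Pi.single j 1) (· - Pi.single j 1) ?_ ?_ ?_ ?_ ?_
    · intro p hp
      simp only [mem_filter, mem_antidiagonalTuple] at hp ⊢
      exact ⟨by rw [sum_add_single_one (mem_univ j), hp], by simp⟩
    · intro q hq
      simp only [mem_filter, mem_antidiagonalTuple] at hq ⊢
      have := sum_add_single_one (mem_univ j) (q - Pi.single j 1)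
      rw [Pi.sub_single_one_add_single_one hq.2] at this
      omega
    · intro p _
      simp
    · intro q hq
      exact Pi.sub_single_one_add_single_one (mem_filter.1 hq).2
    · intro p _
      simp
  rw [sum_comm, sum_congr rfl fun j _ => hfiber j, sum_comm]
  refine sum_congr rfl fun q hq => ?_
  rw [← sum_smul, ← Nat.multinomial_eq_sum_multinomial_sub_single (mem_antidiagonalTuple.1 hq)]

section Ladder

variable {𝕜 : Type*} [NontriviallyNormedField 𝕜]

def IsDerivLadder {E : Type*} [NormedAddCommGroup E] [NormedSpace 𝕜 E] (c : 𝕜)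
    (u : ℕ → 𝕜 → E) : Prop :=
  ∀ m z, HasDerivAt (u m) (c • u (m + 1) z) z

theorem IsDerivLadder.iteratedDeriv_eq {E : Type*} [NormedAddCommGroup E] [NormedSpace 𝕜 E]
    {c : 𝕜} {u : ℕ → 𝕜 → E} (hu : IsDerivLadder c u) (k : ℕ) :
    iteratedDeriv k (u 0) = fun z => c ^ k • u k z := by
  induction k with
  | zero => simp
  | succ k ih =>
    funext z
    rw [iteratedDeriv_succ, ih, ((hu k z).fun_const_smul (c ^ k)).deriv, smul_smul, pow_succ]

variable {𝔸 : Type*} [NormedRing 𝔸] [NormedAlgebra 𝕜 𝔸] {n : ℕ}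

theorem HasDerivAt.list_ofFn_prod {F : Fin n → 𝕜 → 𝔸} {F' : Fin n → 𝔸} {z : 𝕜}
    (h : ∀ i, HasDerivAt (F i) (F' i) z) :
    HasDerivAt (fun z => (List.ofFn (F · z)).prod)
      (∑ j, (List.ofFn (Function.update (F · z) j (F' j))).prod) z := by
  simpa using (HasFDerivAt.multilinear_comp (f := ContinuousMultilinearMap.mkPiAlgebraFin 𝕜 n 𝔸)
    fun i => (h i).hasFDerivAt).hasDerivAt

theorem IsDerivLadder.hasDerivAt_list_ofFn_prod {c : 𝕜} {F : Fin n → ℕ → 𝕜 → 𝔸}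
    (hF : ∀ i, IsDerivLadder c (F i)) (p : Fin n → ℕ) (z : 𝕜) :
    HasDerivAt (fun z => (List.ofFn fun i => F i (p i) z).prod)
      (c • ∑ j, (List.ofFn fun i => F i ((p + Pi.single j 1 : Fin n → ℕ) i) z).prod) z := by
  refine (HasDerivAt.list_ofFn_prod fun i => hF i (p i) z).congr_deriv ?_
  rw [smul_sum]
  refine sum_congr rfl fun j _ => ?_
  have hupdate : Function.update (fun i => F i (p i) z) j (F j (p j + 1) z) =
      fun i => F i ((p + Pi.single j 1 : Fin n → ℕ) i) z := by
    funext i; rcases eq_or_ne i j with rfl | hij <;> simp [*]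
  have h := (MultilinearMap.mkPiAlgebraFin 𝕜 n 𝔸).map_update_smul
    (fun i => F i (p i) z) j c (F j (p j + 1) z)
  rwa [MultilinearMap.mkPiAlgebraFin_apply, MultilinearMap.mkPiAlgebraFin_apply, hupdate] at h

theorem IsDerivLadder.sum_multinomial_smul_list_ofFn_prod {c : 𝕜} {F : Fin n → ℕ → 𝕜 → 𝔸}
    (hF : ∀ i, IsDerivLadder c (F i)) :
    IsDerivLadder c fun k z => ∑ p ∈ Nat.antidiagonalTuple n k,
      Nat.multinomial univ p • (List.ofFn fun i => F i (p i) z).prod := by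
  intro k z
  refine (HasDerivAt.fun_sum fun p _ =>
    (hasDerivAt_list_ofFn_prod hF p z).const_smul (Nat.multinomial univ p)).congr_deriv ?_
  dsimp only
  rw [← Nat.sum_antidiagonalTuple_multinomial_smul_add_single, smul_sum]
  simp only [smul_comm _ c, smul_sum]

end Ladder

theorem Matrix.inv_mul_pow_mul_eq_pow_mod_two {m R : Type*} [Fintype m] [DecidableEq m]
    [CommRing R] {A f : Matrix m m R} (hA : A ^ 2 = 1) (hf : IsUnit f) (k : ℕ) :
    f⁻¹ * A ^ k * f = (f⁻¹ * A * f) ^ (k % 2) := by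
  rw [pow_eq_pow_mod k hA]
  rcases Nat.mod_two_eq_zero_or_one k with h | h <;>
    simp [h, Matrix.nonsing_inv_mul _ ((Matrix.isUnit_iff_isUnit_det _).1 hf)]

theorem Smat_zero : Smat 0 = 1 := by
  simp [Smat, Matrix.one_fin_two]

theorem Dmat_sq : Dmat ^ 2 = 1 := by
  simp [Dmat, sq, Matrix.one_fin_two]

section MatrixCalculus

attribute [local instance] Matrix.linftyOpNormedRing Matrix.linftyOpNormedAlgebra

theorem HasDerivAt.trace_mul_const {𝕜 : Type*} [NontriviallyNormedField 𝕜] [CompleteSpace 𝕜]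
    {m : Type*} [Fintype m] [DecidableEq m] {g : 𝕜 → Matrix m m 𝕜} {g' : Matrix m m 𝕜} {z : 𝕜}
    (hg : HasDerivAt g g' z) (γ : Matrix m m 𝕜) :
    HasDerivAt (fun z => Matrix.trace (g z * γ)) (Matrix.trace (g' * γ)) z :=
  (Matrix.traceLinearMap m 𝕜 𝕜).toContinuousLinearMap.hasFDerivAt.comp_hasDerivAt z
    (hg.mul_const γ)

theorem hasDerivAt_Smat (z : ℝ) : HasDerivAt Smat ((1 / 2 : ℝ) • (Smat z * Dmat)) z := by
  have hS : Smat = fun z =>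
      Real.exp (z / 2) • !![1, 0; 0, 0] + Real.exp (-(z / 2)) • !![0, 0; 0, 1] := by
    funext z; ext i j; fin_cases i <;> fin_cases j <;> simp [Smat]
  rw [hS]
  refine ((((hasDerivAt_id z).div_const 2).exp.smul_const _).add
    (((hasDerivAt_id z).div_const 2).neg.exp.smul_const _)).congr_deriv ?_
  ext i j; fin_cases i <;> fin_cases j <;> simp [Dmat] <;> ring

theorem isDerivLadder_mul_Smat_mul_Dmat_pow_mul (a b : Matrix (Fin 2) (Fin 2) ℝ) :
    IsDerivLadder (1 / 2 : ℝ) fun m z => a * Smat z * Dmat ^ m * b := by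
  intro m z
  refine (((hasDerivAt_Smat z).const_mul a).mul_const (Dmat ^ m)).mul_const b |>.congr_deriv ?_
  dsimp only
  rw [pow_succ' Dmat m]
  simp only [mul_smul_comm, smul_mul_assoc, mul_assoc]

theorem iteratedDeriv_trace_list_ofFn_prod_mul_Smat_mul {n : ℕ}
    (a b : Fin n → Matrix (Fin 2) (Fin 2) ℝ) (γ : Matrix (Fin 2) (Fin 2) ℝ) (k : ℕ) :
    iteratedDeriv k (fun z => Matrix.trace ((List.ofFn fun i => a i * Smat z * b i).prod * γ)) =
      fun z => (1 / 2 : ℝ) ^ k • ∑ p ∈ Nat.antidiagonalTuple n k, Nat.multinomial univ p •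
        Matrix.trace ((List.ofFn fun i => a i * Smat z * Dmat ^ p i * b i).prod * γ) := by
  set u : ℕ → ℝ → ℝ := fun m z => ∑ p ∈ Nat.antidiagonalTuple n m, Nat.multinomial univ p •
    Matrix.trace ((List.ofFn fun i => a i * Smat z * Dmat ^ p i * b i).prod * γ)
  have hu : IsDerivLadder (1 / 2 : ℝ) u := fun m z => by
    have := (IsDerivLadder.sum_multinomial_smul_list_ofFn_prod
      (fun i => isDerivLadder_mul_Smat_mul_Dmat_pow_mul (a i) (b i)) m z).trace_mul_const γ
    simpa only [u, sum_mul, smul_mul_assoc, Matrix.trace_sum, Matrix.trace_smul] using this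
  have hu0 : u 0 = fun z => Matrix.trace ((List.ofFn fun i => a i * Smat z * b i).prod * γ) := by
    simp [u, Nat.antidiagonalTuple_zero_right, Nat.multinomial]
  rw [← hu0, hu.iteratedDeriv_eq]

end MatrixCalculus

theorem iteratedDeriv_trace_eq_sum_partitions_general (n k : ℕ)
    (f : Fin n → Matrix (Fin 2) (Fin 2) ℝ) (hf : ∀ i, IsUnit (f i))
    (γ : Matrix (Fin 2) (Fin 2) ℝ) :
    iteratedDeriv k
      (fun z : ℝ =>
        Matrix.trace ((List.ofFn fun i : Fin n => (f i)⁻¹ * Smat z * f i).prod * γ)) 0 =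
    (1 / 2 ^ k : ℝ) * ∑ p ∈ Pkn k n, (Nat.multinomial Finset.univ p : ℝ) *
        Matrix.trace
          ((List.ofFn fun i : Fin n => ((f i)⁻¹ * Dmat * f i) ^ (p i % 2)).prod * γ) := by
  rw [iteratedDeriv_trace_list_ofFn_prod_mul_Smat_mul (fun i => (f i)⁻¹) f γ k]
  simp only [Smat_zero, mul_one, Matrix.inv_mul_pow_mul_eq_pow_mod_two Dmat_sq (hf _),
    one_div_pow, smul_eq_mul, nsmul_eq_mul, Pkn]

/-- product-rule expansion of the `k`-th derivative of the trace function,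
with the derivatives of `fᵢ⁻¹ S(z) fᵢ` evaluated in terms of parities. -/
theorem iteratedDeriv_trace_eq_sum_partitions (n k : ℕ) (hn : 1 ≤ n)
    (f : Fin n → Matrix (Fin 2) (Fin 2) ℝ) (hf : ∀ i, IsUnit (f i))
    (γ : Matrix (Fin 2) (Fin 2) ℝ) :
    iteratedDeriv k
      (fun z : ℝ =>
        Matrix.trace ((List.ofFn fun i : Fin n => (f i)⁻¹ * Smat z * f i).prod * γ)) 0 =
    (1 / 2 ^ k : ℝ) * ∑ p ∈ Pkn k n, (Nat.multinomial Finset.univ p : ℝ) *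
        Matrix.trace
          ((List.ofFn fun i : Fin n => ((f i)⁻¹ * Dmat * f i) ^ (p i % 2)).prod * γ) :=
  iteratedDeriv_trace_eq_sum_partitions_general n k f hf γ
end

section
/- Let l_1, l_2, l_3, θ_1, θ_2, θ_3, L be real numbers. Then Tr( A(l_1,θ_1) · A(l_2,θ_2) · A(l_3,θ_3) · γ_L ) = 2 sinh(L/2) cos θ_1 cos θ_2 cos θ_3 + 2 sinh(L/2 − (l_2 − l_1)) sin θ_1 sin θ_2 cos θ_3 − 2 sinh(L/2 − (l_3 − l_1)) sin θ_1 cos θ_2 sin θ_3 + 2 sinh(L/2 − (l_3 − l_2)) cos θ_1 sin θ_2 sin θ_3. -/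
open Finset

open Matrix Real

/-! Write `A(l, θ) = cos θ • D - sin θ • J(l)` with `D = diag(1, -1)` and `J(l)` antidiagonal
with entries `e^l, e^{-l}`. Then `D² = 1`, `D` anticommutes with every `J(l)`, commutes with the
diagonal matrices `S(z)`, and `J(a) J(b) = S(2(a - b))`. Expanding the triple product, each of the
eight words reduces to `± D S(z)`, whose trace is `2 sinh (z / 2)`, or, up to a cyclic
permutation, to `± J(l) S(z)`, whose trace is zero. -/

noncomputable def Jmat (l : ℝ) : Matrix (Fin 2) (Fin 2) ℝ := !![0, exp l; exp (-l), 0]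

theorem Amat_eq (l θ : ℝ) : Amat l θ = cos θ • Dmat - sin θ • Jmat l := by
  ext i j; fin_cases i <;> fin_cases j <;> simp [Amat, Dmat, Jmat, mul_comm]

theorem gammaMat_eq_Smat (L : ℝ) : gammaMat L = Smat L := rfl

theorem Dmat_mul_Dmat : Dmat * Dmat = 1 := by
  ext i j; fin_cases i <;> fin_cases j <;> simp [Dmat]

theorem Dmat_mul_Jmat (a : ℝ) : Dmat * Jmat a = -(Jmat a * Dmat) := by
  ext i j; fin_cases i <;> fin_cases j <;> simp [Dmat, Jmat]

theorem Jmat_mul_Jmat (a b : ℝ) : Jmat a * Jmat b = Smat (2 * (a - b)) := by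
  ext i j; fin_cases i <;> fin_cases j <;> simp [Jmat, Smat, ← Real.exp_add] <;> ring_nf

theorem Smat_mul_Smat (w z : ℝ) : Smat w * Smat z = Smat (w + z) := by
  ext i j; fin_cases i <;> fin_cases j <;> simp [Smat, ← Real.exp_add] <;> ring_nf

theorem commute_Smat_Dmat (z : ℝ) : Commute (Smat z) Dmat := by
  ext i j; fin_cases i <;> fin_cases j <;> simp [Smat, Dmat]

theorem Dmat_mul_Jmat_mul (a : ℝ) (M : Matrix (Fin 2) (Fin 2) ℝ) :
    Dmat * (Jmat a * M) = -(Jmat a * (Dmat * M)) := by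
  rw [← mul_assoc, Dmat_mul_Jmat, neg_mul, mul_assoc]

theorem Jmat_mul_Jmat_mul (a b : ℝ) (M : Matrix (Fin 2) (Fin 2) ℝ) :
    Jmat a * (Jmat b * M) = Smat (2 * (a - b)) * M := by
  rw [← mul_assoc, Jmat_mul_Jmat]

theorem trace_Dmat_mul_Smat (z : ℝ) : trace (Dmat * Smat z) = 2 * sinh (z / 2) := by
  simp [Dmat, Smat, trace_fin_two, sinh_eq]; ring

theorem trace_Jmat_mul_Smat (a z : ℝ) : trace (Jmat a * Smat z) = 0 := by
  simp [Jmat, Smat, trace_fin_two]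

theorem trace_Smat_mul_Jmat_mul_Smat (w a z : ℝ) : trace (Smat w * (Jmat a * Smat z)) = 0 := by
  rw [trace_mul_comm, mul_assoc, Smat_mul_Smat, trace_Jmat_mul_Smat]

/-- `Tr(A(l₁,θ₁)·A(l₂,θ₂)·A(l₃,θ₃)·γ_L)`. -/
theorem trace_Amat_Amat_Amat_gammaMat (l₁ l₂ l₃ θ₁ θ₂ θ₃ L : ℝ) :
    Matrix.trace (Amat l₁ θ₁ * Amat l₂ θ₂ * Amat l₃ θ₃ * gammaMat L) =
      2 * Real.sinh (L / 2) * Real.cos θ₁ * Real.cos θ₂ * Real.cos θ₃ +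
      2 * Real.sinh (L / 2 - (l₂ - l₁)) * Real.sin θ₁ * Real.sin θ₂ * Real.cos θ₃ -
      2 * Real.sinh (L / 2 - (l₃ - l₁)) * Real.sin θ₁ * Real.cos θ₂ * Real.sin θ₃ +
      2 * Real.sinh (L / 2 - (l₃ - l₂)) * Real.cos θ₁ * Real.sin θ₂ * Real.sin θ₃ := by
  simp only [Amat_eq, gammaMat_eq_Smat, sub_mul, mul_sub, smul_mul_assoc, mul_smul_comm,
    trace_sub, trace_smul, smul_eq_mul]
  simp only [mul_assoc, Dmat_mul_Jmat_mul, Jmat_mul_Jmat_mul, mul_neg, neg_mul, Dmat_mul_Dmat, one_mul,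
    (commute_Smat_Dmat _).left_comm, Smat_mul_Smat, trace_neg, trace_Dmat_mul_Smat, trace_Jmat_mul_Smat,
    trace_Smat_mul_Jmat_mul_Smat]
  ring_nf
end
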